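/- arXiv:1502.05633 — 3 statements merged into one kernel-verified Lean document; each statement's English description precedes it below -/
import Mathlib

section
/- Let ψ_{i+1}, …, ψ_j be independent random variables with ψ_t ~ Beta(m+2mr, (2t-3)m + 2mr(t-1)) for a fixed integer m ≥ 2 and real r ≥ 0, and let S_i^{(j)} = ∏_{t=i+1}^{j} (1 - ψ_t). Then, with χ = (1+2r)/(2+2r), E[S_i^{(j)}] ≤ (i/j)^χ for all 1 ≤ i < j. -/
open MeasureTheory ProbabilityTheory

/-- The Beta(a,b) probability measure on ℝ: normalized density x^(a-1)(1-x)^(b-1) on (0,1). -/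
noncomputable def betaMeasure' (a b : ℝ) : Measure ℝ :=
  (volume.restrict (Set.Ioo (0:ℝ) 1)).withDensity
    (fun x => ENNReal.ofReal
      (x ^ (a-1) * (1-x) ^ (b-1) / ∫ y in Set.Ioo (0:ℝ) 1, y ^ (a-1) * (1-y) ^ (b-1)))

/-!
By independence, the expectation of the product is the product of the means
`E[1 - ψ_t] = b/(a+b) = (s t - s - 1)/(s t - 2)`, where `s = 2 + 2r`, so that `χ = 1 - 1/s`.
Bernoulli's inequality for the exponent `1/s ≤ 1` gives `((t-1)/t)^(1/s) ≤ 1 - 1/(s t)`, hence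
`((t-1)/t)^χ ≥ s(t-1)/(s t - 1) ≥ (s t - s - 1)/(s t - 2)`. The product of the `(t-1)/t`
telescopes to `i/j`.
-/

open Set

lemma setIntegral_Ioo_rpow_mul_one_sub_rpow {a b : ℝ} (ha : 0 < a) (hb : 0 < b) :
    ∫ y in Ioo (0:ℝ) 1, y ^ (a - 1) * (1 - y) ^ (b - 1) = beta a b := by
  have hcomplex : Complex.betaIntegral a b =
      ((∫ y in Ioo (0:ℝ) 1, y ^ (a - 1) * (1 - y) ^ (b - 1) : ℝ) : ℂ) := by
    rw [Complex.betaIntegral, intervalIntegral.integral_of_le zero_le_one,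
      integral_Ioc_eq_integral_Ioo, ← integral_complex_ofReal]
    refine setIntegral_congr_fun measurableSet_Ioo fun x ⟨hx0, hx1⟩ ↦ ?_
    rw [Complex.ofReal_mul, Complex.ofReal_cpow hx0.le, Complex.ofReal_cpow (by linarith)]
    push_cast
    ring
  rw [beta_eq_betaIntegralReal a b ha hb, hcomplex, Complex.ofReal_re]

lemma beta_add_one_right {a b : ℝ} (hb : 0 < b) (hab : 0 < a + b) :
    beta a (b + 1) = beta a b * (b / (a + b)) := by
  rw [beta, beta, ← add_assoc, Real.Gamma_add_one hb.ne', Real.Gamma_add_one hab.ne']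
  have := (Real.Gamma_pos_of_pos hab).ne'
  field_simp

lemma integral_one_sub_betaMeasure' {a b : ℝ} (ha : 0 < a) (hb : 0 < b) :
    ∫ x, (1 - x) ∂betaMeasure' a b = b / (a + b) := by
  rw [betaMeasure', setIntegral_Ioo_rpow_mul_one_sub_rpow ha hb,
    integral_withDensity_eq_integral_toReal_smul (by fun_prop) (by simp)]
  have hB := beta_pos ha hb
  calc ∫ x in Ioo (0:ℝ) 1,
        (ENNReal.ofReal (x ^ (a - 1) * (1 - x) ^ (b - 1) / beta a b)).toReal • (1 - x)
      = (∫ x in Ioo (0:ℝ) 1, x ^ (a - 1) * (1 - x) ^ (b + 1 - 1)) / beta a b := by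
        rw [← integral_div]
        refine setIntegral_congr_fun measurableSet_Ioo fun x ⟨hx0, hx1⟩ ↦ ?_
        have h1x : 0 < 1 - x := by linarith
        rw [ENNReal.toReal_ofReal (by positivity), smul_eq_mul, add_sub_cancel_right,
          Real.rpow_sub_one h1x.ne' b]
        field_simp
    _ = b / (a + b) := by
        rw [setIntegral_Ioo_rpow_mul_one_sub_rpow ha (by linarith),
          beta_add_one_right hb (by linarith)]
        field_simp

theorem ProbabilityTheory.iIndepFun.integral_finset_prod_comp {Ω ι 𝓧 : Type*}
    [MeasurableSpace Ω] [MeasurableSpace 𝓧] {μ : Measure Ω} {X : ι → Ω → 𝓧}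
    (hX : iIndepFun X μ) (mX : ∀ i, AEMeasurable (X i) μ) {f : ι → 𝓧 → ℝ}
    (hf : ∀ i, AEStronglyMeasurable (f i) (μ.map (X i))) (s : Finset ι) :
    ∫ ω, ∏ i ∈ s, f i (X i ω) ∂μ = ∏ i ∈ s, ∫ ω, f i (X i ω) ∂μ := by
  simp_rw [← Finset.prod_coe_sort s]
  exact (hX.precomp Subtype.val_injective).integral_fun_prod_comp (f := fun i : s ↦ f i)
      (fun i ↦ mX i) (fun i ↦ hf i)

lemma prod_Icc_sub_one_div {i j : ℕ} (hi : 0 < i) (hij : i ≤ j) :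
    ∏ t ∈ Finset.Icc (i + 1) j, ((t : ℝ) - 1) / t = i / j := by
  induction j, hij using Nat.le_induction with
  | base => simp [hi.ne']
  | succ n hin ih =>
    have hn : (n : ℝ) ≠ 0 := Nat.cast_ne_zero.2 (by omega)
    rw [Finset.prod_Icc_succ_top (by omega), ih]
    push_cast
    field_simp
    ring

lemma div_le_rpow_one_sub_inv {s T : ℝ} (hs : 1 ≤ s) (hT : 1 < T) (hsT : 2 < s * T) :
    (s * T - s - 1) / (s * T - 2) ≤ ((T - 1) / T) ^ (1 - 1 / s) := by
  set x := (T - 1) / T with hx_def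
  have hT0 : 0 < T := by linarith
  have hx : 0 < x := div_pos (by linarith) hT0
  have hbernoulli : x ^ (1 / s) ≤ 1 - 1 / (s * T) := by
    have h := rpow_one_add_le_one_add_mul_self (s := -1 / T) (p := 1 / s)
      (by rw [neg_div, neg_le_neg_iff, div_le_one hT0]; exact hT.le) (by positivity)
      (by rw [div_le_one (by linarith)]; exact hs)
    convert h using 2
    · rw [hx_def]; field_simp; ring
    · field_simp; ring
  calc (s * T - s - 1) / (s * T - 2) ≤ x / (1 - 1 / (s * T)) := by
        have hden : 0 < 1 - 1 / (s * T) := by rw [sub_pos, div_lt_one (by linarith)]; linarith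
        rw [hx_def, div_le_div_iff₀ (by linarith) hden]
        field_simp
        nlinarith
    _ ≤ x / x ^ (1 / s) := div_le_div_of_nonneg_left hx.le (by positivity) hbernoulli
    _ = x ^ (1 - 1 / s) := by rw [Real.rpow_sub hx, Real.rpow_one]

/-- If ψ_{i+1},…,ψ_j are independent with ψ_t ~ Beta(m+2mr, (2t-3)m+2mr(t-1)) (m ≥ 2 integer,
r ≥ 0 real), and S_i^{(j)} = ∏_{t=i+1}^j (1-ψ_t), then with χ = (1+2r)/(2+2r),
E[S_i^{(j)}] ≤ (i/j)^χ for 1 ≤ i < j. -/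
theorem stmt_3 {Ω : Type*} [MeasurableSpace Ω] (P : Measure Ω) [IsProbabilityMeasure P]
    (m : ℕ) (hm : 2 ≤ m) (r : ℝ) (hr : 0 ≤ r) (i j : ℕ) (hi : 1 ≤ i) (hij : i < j)
    (ψ : ℕ → Ω → ℝ) (hmeas : ∀ t, Measurable (ψ t))
    (hind : iIndepFun ψ P)
    (hlaw : ∀ t ∈ Finset.Icc (i+1) j,
      Measure.map (ψ t) P = betaMeasure' ((m:ℝ) + 2*m*r) ((2*(t:ℝ)-3)*m + 2*m*r*((t:ℝ)-1))) :
    ∫ ω, ∏ t ∈ Finset.Icc (i+1) j, (1 - ψ t ω) ∂P ≤ ((i:ℝ)/j) ^ ((1+2*r)/(2+2*r)) := by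
  have hm0 : (0 : ℝ) < m := by exact_mod_cast (by omega : 0 < m)
  have hχ : (1 + 2 * r) / (2 + 2 * r) = 1 - 1 / (2 + 2 * r) := by field_simp; ring
  set s : ℝ := 2 + 2 * r
  have two_le : ∀ t ∈ Finset.Icc (i + 1) j, (2 : ℝ) ≤ t := fun t ht ↦ by
    exact_mod_cast (by simp at ht; omega : 2 ≤ t)
  have hmean : ∀ t ∈ Finset.Icc (i + 1) j,
      ∫ ω, (1 - ψ t ω) ∂P = (s * t - s - 1) / (s * t - 2) := by
    intro t ht
    have := two_le t ht
    rw [← integral_map (hmeas t).aemeasurable (by fun_prop), hlaw t ht,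
      integral_one_sub_betaMeasure' (by positivity) (add_pos_of_pos_of_nonneg
        (mul_pos (by linarith) hm0) (mul_nonneg (by positivity) (by linarith)))]
    field_simp
    ring
  calc ∫ ω, ∏ t ∈ Finset.Icc (i + 1) j, (1 - ψ t ω) ∂P
      = ∏ t ∈ Finset.Icc (i + 1) j, ∫ ω, (1 - ψ t ω) ∂P :=
        hind.integral_finset_prod_comp (fun t ↦ (hmeas t).aemeasurable) (fun _ ↦ by fun_prop) _
    _ ≤ ∏ t ∈ Finset.Icc (i + 1) j, (((t : ℝ) - 1) / t) ^ (1 - 1 / s) := by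
        refine Finset.prod_le_prod (fun t ht ↦ ?_) (fun t ht ↦ ?_) <;>
          have := two_le t ht <;> rw [hmean t ht]
        · exact div_nonneg (by nlinarith) (by nlinarith)
        · exact div_le_rpow_one_sub_inv (by linarith) (by linarith) (by nlinarith)
    _ = (∏ t ∈ Finset.Icc (i + 1) j, ((t : ℝ) - 1) / t) ^ (1 - 1 / s) :=
        Real.finsetProd_rpow _ _
          (fun t ht ↦ div_nonneg (by linarith [two_le t ht]) (by positivity)) _
    _ = ((i : ℝ) / j) ^ ((1 + 2 * r) / (2 + 2 * r)) := by
        rw [prod_Icc_sub_one_div hi hij.le, hχ]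
end

section
/- For each fixed a > 0 and integer j ≥ 0 there exists C > 0 such that for all integers k ≥ 2, ∫_0^1 |log y|^j (1-y)^k y^{a-1} dy ≤ C (log k)^j k^{-a}. -/
/-!
Substitute `s = k y`. Then `(1 - y) ^ k ≤ exp (-s)`, and `log y = log s - log k` together with
`|log s| ≤ (s ^ ε + s ^ (-ε)) / ε` and `1 ≤ log k / log 2` gives
`|log y| ^ j ≲ (log k) ^ j (s ^ μ + s ^ (-μ))` with `μ = ε j`. Choosing `ε` so small that
`μ < a`, the majorant integrates over `(0, ∞)` to `(Γ(a + μ) + Γ(a - μ)) k ^ (-a)`.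
-/

open MeasureTheory Real Set

lemma abs_log_le_rpow_add_rpow_neg_div {s ε : ℝ} (hs : 0 < s) (hε : 0 < ε) :
    |log s| ≤ (s ^ ε + s ^ (-ε)) / ε := by
  have hpos := log_le_rpow_div hs.le hε
  have hneg := log_le_rpow_div (inv_nonneg.2 hs.le) hε
  rw [log_inv, inv_rpow hs.le, ← rpow_neg hs.le] at hneg
  have : 0 ≤ s ^ ε / ε := by positivity
  have : 0 ≤ s ^ (-ε) / ε := by positivity
  rw [add_div, abs_le]
  constructor <;> linarith

lemma one_le_rpow_add_rpow_neg {s : ℝ} (hs : 0 < s) (ε : ℝ) : 1 ≤ s ^ ε + s ^ (-ε) := by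
  rw [rpow_neg hs.le]
  have hx : 0 < s ^ ε := by positivity
  rcases le_total 1 (s ^ ε) with h | h
  · linarith [inv_pos.2 hx]
  · linarith [(one_le_inv₀ hx).2 h]

lemma abs_log_le_mul_log_mul_rpow_add_rpow_neg {k y ε : ℝ} (hk : 2 ≤ k) (hy : 0 < y)
    (hε : 0 < ε) :
    |log y| ≤ (1 + 1 / (ε * log 2)) * log k * ((k * y) ^ ε + (k * y) ^ (-ε)) := by
  have hk0 : 0 < k := by linarith
  have hlog2 : 0 < log 2 := log_pos one_lt_two
  have hlogk : log 2 ≤ log k := log_le_log two_pos hk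
  have hky : 0 < k * y := mul_pos hk0 hy
  set w := (k * y) ^ ε + (k * y) ^ (-ε)
  have hw : 1 ≤ w := one_le_rpow_add_rpow_neg hky ε
  have hsplit : log y = log (k * y) - log k := by rw [log_mul hk0.ne' hy.ne']; ring
  have hratio : 1 ≤ log k / log 2 := (one_le_div hlog2).2 hlogk
  calc |log y| ≤ |log (k * y)| + log k := by
        rw [hsplit]
        exact (abs_sub _ _).trans_eq (by rw [abs_of_pos (hlog2.trans_le hlogk)])
    _ ≤ w / ε * (log k / log 2) + log k * w := by
        gcongr
        · calc |log (k * y)| ≤ w / ε := abs_log_le_rpow_add_rpow_neg_div hky hε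
            _ ≤ w / ε * (log k / log 2) := le_mul_of_one_le_right (by positivity) hratio
        · exact le_mul_of_one_le_right (by linarith) hw
    _ = (1 + 1 / (ε * log 2)) * log k * w := by field_simp; ring

lemma abs_log_pow_le_mul_rpow_add_rpow_neg {k y ε : ℝ} (hk : 2 ≤ k) (hy : 0 < y)
    (hε : 0 < ε) (j : ℕ) :
    |log y| ^ j ≤ 2 ^ (j - 1) * ((1 + 1 / (ε * log 2)) * log k) ^ j *
      ((k * y) ^ (ε * j) + (k * y) ^ (-(ε * j))) := by
  have hky : 0 ≤ k * y := mul_nonneg (by linarith) hy.le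
  have hlogk : 0 ≤ log k := log_nonneg (by linarith)
  calc |log y| ^ j ≤ ((1 + 1 / (ε * log 2)) * log k * ((k * y) ^ ε + (k * y) ^ (-ε))) ^ j :=
        pow_le_pow_left₀ (abs_nonneg _) (abs_log_le_mul_log_mul_rpow_add_rpow_neg hk hy hε) j
    _ ≤ ((1 + 1 / (ε * log 2)) * log k) ^ j *
          (2 ^ (j - 1) * (((k * y) ^ ε) ^ j + ((k * y) ^ (-ε)) ^ j)) := by
        rw [mul_pow]
        gcongr
        exact add_pow_le (by positivity) (by positivity) j
    _ = _ := by
        rw [← rpow_mul_natCast hky, ← rpow_mul_natCast hky, neg_mul]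
        ring

lemma rpow_mul_rpow_mul_exp_eq {a μ k y : ℝ} (hk : 0 < k) (hy : 0 < y) :
    (k * y) ^ μ * y ^ (a - 1) * exp (-(k * y)) = k ^ μ * (y ^ (a + μ - 1) * exp (-(k * y))) := by
  rw [mul_rpow hk.le hy.le, show a + μ - 1 = μ + (a - 1) by ring, rpow_add hy]
  ring

lemma integrableOn_rpow_mul_rpow_mul_exp {a μ k : ℝ} (h : 0 < a + μ) (hk : 0 < k) :
    IntegrableOn (fun y ↦ (k * y) ^ μ * y ^ (a - 1) * exp (-(k * y))) (Ioi 0) := by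
  have := integrableOn_rpow_mul_exp_neg_mul_rpow (s := a + μ - 1) (p := 1) (by linarith)
    one_pos hk
  simp only [rpow_one, neg_mul] at this
  exact IntegrableOn.congr_fun (this.const_mul (k ^ μ))
    (fun y hy ↦ (rpow_mul_rpow_mul_exp_eq hk hy).symm) measurableSet_Ioi

lemma integral_rpow_mul_rpow_mul_exp {a μ k : ℝ} (h : 0 < a + μ) (hk : 0 < k) :
    ∫ y in Ioi 0, (k * y) ^ μ * y ^ (a - 1) * exp (-(k * y)) = Gamma (a + μ) * k ^ (-a) := by
  rw [setIntegral_congr_fun measurableSet_Ioi (fun y hy ↦ rpow_mul_rpow_mul_exp_eq hk hy),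
    integral_const_mul, integral_rpow_mul_exp_neg_mul_Ioi h hk, one_div, inv_rpow hk.le,
    ← rpow_neg hk.le, mul_left_comm, ← mul_assoc, ← rpow_add hk]
  ring_nf

lemma abs_log_pow_mul_one_sub_pow_mul_rpow_le {a ε y : ℝ} {k : ℕ} (hk : 2 ≤ k)
    (hy : y ∈ Ioo 0 1) (hε : 0 < ε) (j : ℕ) :
    |log y| ^ j * (1 - y) ^ k * y ^ (a - 1) ≤
      2 ^ (j - 1) * ((1 + 1 / (ε * log 2)) * log k) ^ j *
        ((k * y) ^ (ε * j) * y ^ (a - 1) * exp (-(k * y)) +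
          (k * y) ^ (-(ε * j)) * y ^ (a - 1) * exp (-(k * y))) := by
  have hlog := abs_log_pow_le_mul_rpow_add_rpow_neg (k := k) (by exact_mod_cast hk) hy.1 hε j
  have hexp : (1 - y) ^ k ≤ exp (-(k * y)) :=
    calc (1 - y) ^ k ≤ exp (-y) ^ k :=
          pow_le_pow_left₀ (by linarith [hy.2]) (one_sub_le_exp_neg y) k
      _ = exp (-(k * y)) := by rw [← exp_nat_mul]; ring_nf
  have : 0 ≤ 1 - y := by linarith [hy.2]
  have := hy.1.le
  calc |log y| ^ j * (1 - y) ^ k * y ^ (a - 1)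
      ≤ 2 ^ (j - 1) * ((1 + 1 / (ε * log 2)) * log k) ^ j *
          ((k * y) ^ (ε * j) + (k * y) ^ (-(ε * j))) * exp (-(k * y)) * y ^ (a - 1) := by
        gcongr
    _ = _ := by ring

lemma setIntegral_mono_of_subset {X : Type*} [MeasurableSpace X] {μ : Measure X}
    {f g : X → ℝ} {s t : Set X} (hst : s ⊆ t) (ht : MeasurableSet t)
    (hf : ∀ x ∈ s, 0 ≤ f x) (hfg : ∀ x ∈ s, f x ≤ g x) (hg : ∀ x ∈ t, 0 ≤ g x)
    (hgi : IntegrableOn g t μ) :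
    ∫ x in s, f x ∂μ ≤ ∫ x in t, g x ∂μ :=
  (setIntegral_mono_of_nonneg hf hfg (hgi.mono_set hst)).trans
    (setIntegral_mono_set hgi (ae_restrict_of_forall_mem ht hg) hst.eventuallyLE)

/-- For fixed a > 0 and j ≥ 0 there is C > 0 such that for all integers k ≥ 2,
∫_0^1 |log y|^j (1-y)^k y^{a-1} dy ≤ C (log k)^j k^{-a}. -/
theorem stmt_10 (a : ℝ) (ha : 0 < a) (j : ℕ) :
    ∃ C > 0, ∀ k : ℕ, 2 ≤ k →
      (∫ y in Set.Ioo (0:ℝ) 1, |Real.log y| ^ j * (1-y) ^ k * y ^ (a-1)) ≤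
        C * Real.log k ^ j * (k:ℝ) ^ (-a) := by
  set ε := a / (j + 1)
  have hε : 0 < ε := by positivity
  have hεj : ε * j < a := by
    rw [div_mul_eq_mul_div, div_lt_iff₀ (by positivity)]
    nlinarith
  set c := 1 + 1 / (ε * log 2)
  have hΓ := Gamma_pos_of_pos (show 0 < a + -(ε * j) by linarith)
  refine ⟨2 ^ (j - 1) * c ^ j * (Gamma (a + ε * j) + Gamma (a + -(ε * j))), by positivity,
    fun k hk ↦ ?_⟩
  have hk0 : (0 : ℝ) < k := by positivity
  have hlogk : 0 ≤ log (k : ℝ) := log_nonneg (by exact_mod_cast one_le_two.trans hk)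
  have hint_pos := integrableOn_rpow_mul_rpow_mul_exp (a := a) (μ := ε * j) (by positivity) hk0
  have hint_neg := integrableOn_rpow_mul_rpow_mul_exp (a := a) (μ := -(ε * j)) (by linarith) hk0
  calc _ ≤ ∫ y in Ioi 0, 2 ^ (j - 1) * (c * log k) ^ j *
          ((k * y) ^ (ε * j) * y ^ (a - 1) * exp (-(k * y)) +
            (k * y) ^ (-(ε * j)) * y ^ (a - 1) * exp (-(k * y))) := by
        refine setIntegral_mono_of_subset Ioo_subset_Ioi_self measurableSet_Ioi
          (fun y hy ↦ ?_) (fun y hy ↦ abs_log_pow_mul_one_sub_pow_mul_rpow_le hk hy hε j)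
          (fun y (hy : 0 < y) ↦ by positivity) ((hint_pos.add hint_neg).const_mul _)
        have : 0 ≤ 1 - y := by linarith [hy.2]
        have := hy.1.le
        positivity
    _ = _ := by
        rw [integral_const_mul, integral_add hint_pos hint_neg,
          integral_rpow_mul_rpow_mul_exp (by positivity) hk0,
          integral_rpow_mul_rpow_mul_exp (by linarith) hk0, mul_pow]
        ring
end

section
/- Fix C > 0 and suppose that for all n ≥ 2 and 1 ≤ i,j ≤ n, P(d(v_i,v_j) = k) ≤ (C log n)^k/√(ij) for every k ≥ 1 (where d is the graph distance on a random graph with vertices v_1,…,v_n). If w_1, w_2 are two independent uniformly chosen vertices, then for K = ⌊log n/(2C' log log n)⌋ with a suitable constant C' depending only on C, P(d(w_1,w_2) ≤ K) → 0 as n → ∞. -/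
/-!
Write `L = log n`. For `1 ≤ k ≤ L / (4 log L)` and `C ≤ L` we have
`(C L)^k ≤ L^(2k) ≤ e^(L/2) = √n`, and `Σ_{i ≤ n} 1/√i ≤ 2√n` turns the averaged bound into
`P(d = k) ≤ 4 (C L)^k / n ≤ 4/√n`; also `P(d = 0) ≤ 1/n ≤ 4/√n`. Summing over the at most
`L + 1` admissible values of `k` gives `P(d ≤ K) ≤ 4 (L + 1)/√n → 0`, with `C' = 2`.
-/

open MeasureTheory Filter Real Finset Topology

theorem sum_Icc_one_div_sqrt_le (n : ℕ) : ∑ i ∈ Icc 1 n, 1 / √i ≤ 2 * √n := by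
  induction n with
  | zero => simp
  | succ n ih =>
    rw [sum_Icc_succ_top (by omega)]
    have hpos : 0 < √((n : ℝ) + 1) := sqrt_pos.2 (by positivity)
    have hstep : 1 / √((n : ℝ) + 1) ≤ 2 * (√((n : ℝ) + 1) - √n) := by
      rw [div_le_iff₀ hpos]
      nlinarith [sq_nonneg (√((n : ℝ) + 1) - √n), sq_sqrt n.cast_nonneg,
        sq_sqrt (by positivity : (0 : ℝ) ≤ n + 1)]
    push_cast
    linarith

theorem sum_Icc_sum_Icc_div_sqrt_mul_le {a : ℝ} (ha : 0 ≤ a) (n : ℕ) :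
    ∑ i ∈ Icc 1 n, ∑ j ∈ Icc 1 n, a / √((i : ℝ) * j) ≤ 4 * n * a := by
  have hfactor : ∑ i ∈ Icc 1 n, ∑ j ∈ Icc 1 n, a / √((i : ℝ) * j)
      = a * (∑ i ∈ Icc 1 n, 1 / √i) ^ 2 := by
    simp_rw [sq, sum_mul_sum, mul_sum, sqrt_mul (Nat.cast_nonneg _)]
    refine sum_congr rfl fun i _ => sum_congr rfl fun j _ => ?_
    field_simp
  calc _ = a * (∑ i ∈ Icc 1 n, 1 / √i) ^ 2 := hfactor
    _ ≤ a * (2 * √n) ^ 2 := by gcongr; exact sum_Icc_one_div_sqrt_le n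
    _ = 4 * n * a := by rw [mul_pow, sq_sqrt n.cast_nonneg]; ring

theorem pow_le_exp_half_of_le_div_log {a L : ℝ} {k : ℕ} (ha : 0 ≤ a) (haL : a ≤ L ^ 2) (hL : 1 < L)
    (hk : (k : ℝ) ≤ L / (4 * log L)) : a ^ k ≤ exp (L / 2) := by
  have hk' : k * (4 * log L) ≤ L := (le_div_iff₀ (by have := log_pos hL; positivity)).1 hk
  calc a ^ k ≤ (L ^ 2) ^ k := pow_le_pow_left₀ ha haL k
    _ = exp (k * log (L ^ 2)) := by rw [exp_nat_mul, exp_log (by positivity)]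
    _ ≤ exp (L / 2) := by
      rw [exp_le_exp, log_pow]
      push_cast
      linarith

theorem sqrt_eq_exp_log_div_two {x : ℝ} (hx : 0 < x) : √x = exp (log x / 2) := by
  rw [sqrt_eq_rpow, rpow_def_of_pos hx, mul_one_div]

theorem measureReal_setOf_natCast_le_le {ν : Measure ℕ} {x b : ℝ} (hx : 0 ≤ x)
    (hb : ∀ m : ℕ, (m : ℝ) ≤ x → ν.real {m} ≤ b) :
    ν.real {m : ℕ | (m : ℝ) ≤ x} ≤ (x + 1) * b := by
  have hset : {m : ℕ | (m : ℝ) ≤ x} = ⋃ m ∈ range (⌊x⌋₊ + 1), {m} := by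
    ext m
    simp [Nat.le_floor_iff hx]
  have hb0 : 0 ≤ b := measureReal_nonneg.trans (hb 0 (by simpa using hx))
  calc ν.real {m : ℕ | (m : ℝ) ≤ x} ≤ ∑ m ∈ range (⌊x⌋₊ + 1), ν.real {m} :=
        hset ▸ measureReal_biUnion_finset_le _ _
    _ ≤ ∑ _m ∈ range (⌊x⌋₊ + 1), b := by
        refine sum_le_sum fun m hm => hb m ?_
        exact (Nat.le_floor_iff hx).1 (Nat.lt_succ_iff.1 (mem_range.1 hm))
    _ = (⌊x⌋₊ + 1) * b := by simp
    _ ≤ (x + 1) * b := by gcongr; exact Nat.floor_le hx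

theorem tendsto_log_add_one_div_sqrt_atTop :
    Tendsto (fun x : ℝ => (log x + 1) / √x) atTop (𝓝 0) := by
  have hlog := (isLittleO_log_rpow_atTop (r := 1 / 2) (by norm_num)).tendsto_div_nhds_zero
  have hinv := (tendsto_rpow_atTop (y := 1 / 2) (by norm_num)).inv_tendsto_atTop
  simpa [sqrt_eq_rpow, add_div] using hlog.add hinv

theorem one_div_le_four_div_sqrt {x : ℝ} (hx : 1 ≤ x) : 1 / x ≤ 4 / √x := by
  have hs : 1 ≤ √x := one_le_sqrt.2 hx
  calc 1 / x = 1 / (√x * √x) := by rw [mul_self_sqrt (by linarith)]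
    _ ≤ 1 / √x := by gcongr; nlinarith
    _ ≤ 4 / √x := by gcongr; norm_num

theorem measureReal_singleton_le_four_div_sqrt {C : ℝ} (hC : 0 ≤ C) {ν : Measure ℕ} {n : ℕ}
    (hn : 1 ≤ n) (h0 : ν.real {0} ≤ 1 / (n : ℝ))
    (hk : ∀ k : ℕ, 1 ≤ k → ν.real {k} ≤ (1 / (n : ℝ) ^ 2) *
      ∑ i ∈ Icc 1 n, ∑ j ∈ Icc 1 n, (C * log n) ^ k / √((i : ℝ) * j))
    (hCL : C ≤ log n) (hL : 1 < log n) {m : ℕ} (hm : (m : ℝ) ≤ log n / (4 * log (log n))) :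
    ν.real {m} ≤ 4 / √n := by
  have hn' : (1 : ℝ) ≤ n := by exact_mod_cast hn
  rcases m.eq_zero_or_pos with rfl | hm1
  · exact h0.trans (one_div_le_four_div_sqrt hn')
  have hpow : (C * log n) ^ m ≤ √n := by
    rw [sqrt_eq_exp_log_div_two (by positivity)]
    exact pow_le_exp_half_of_le_div_log (by positivity) (by rw [sq]; gcongr) hL hm
  calc ν.real {m} ≤ (1 / (n : ℝ) ^ 2) *
        ∑ i ∈ Icc 1 n, ∑ j ∈ Icc 1 n, (C * log n) ^ m / √((i : ℝ) * j) := hk m hm1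
    _ ≤ (1 / (n : ℝ) ^ 2) * (4 * n * √n) := by
        gcongr
        exact (sum_Icc_sum_Icc_div_sqrt_mul_le (by positivity) n).trans (by gcongr)
    _ = 4 / √n := by
        have hs : 0 < √(n : ℝ) := sqrt_pos.2 (by positivity)
        field_simp
        rw [sq_sqrt n.cast_nonneg]

theorem stmt_16_general (C : ℝ) (hC : 0 < C) (μ : ℕ → Measure ℕ)
    (h0 : ∀ n : ℕ, 2 ≤ n → (μ n {0}).toReal ≤ 1/(n:ℝ))
    (hk : ∀ n : ℕ, 2 ≤ n → ∀ k : ℕ, 1 ≤ k →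
      (μ n {k}).toReal ≤ (1/(n:ℝ)^2) *
        ∑ i ∈ Finset.Icc 1 n, ∑ j ∈ Finset.Icc 1 n,
          (C * Real.log n) ^ k / Real.sqrt ((i:ℝ) * j)) :
    ∃ C' > (0:ℝ), Tendsto
      (fun n : ℕ => (μ n {m : ℕ |
        (m:ℝ) ≤ Real.log n / (2 * C' * Real.log (Real.log n))}).toReal)
      atTop (nhds 0) := by
  refine ⟨2, two_pos, ?_⟩
  have hbound : Tendsto (fun n : ℕ => 4 * ((log n + 1) / √n)) atTop (𝓝 0) := by
    simpa using (tendsto_log_add_one_div_sqrt_atTop.comp tendsto_natCast_atTop_atTop).const_mul 4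
  refine squeeze_zero' (.of_forall fun n => ENNReal.toReal_nonneg) ?_ hbound
  have hlog := tendsto_log_atTop.comp tendsto_natCast_atTop_atTop
  filter_upwards [eventually_ge_atTop 2, hlog.eventually_ge_atTop (max C (exp 1))] with n hn hL
  replace hL : C ≤ log n ∧ exp 1 ≤ log n := max_le_iff.1 hL
  have hL1 : 1 < log n := (one_lt_exp_iff.2 one_pos).trans_le hL.2
  have hLL : 1 ≤ log (log n) := (le_log_iff_exp_le (by linarith)).2 hL.2
  have hx : log n / (2 * 2 * log (log n)) ≤ log n := div_le_self (by linarith) (by linarith)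
  calc (μ n {m : ℕ | (m : ℝ) ≤ log n / (2 * 2 * log (log n))}).toReal
      ≤ (log n / (2 * 2 * log (log n)) + 1) * (4 / √n) := by
        refine measureReal_setOf_natCast_le_le (by positivity) fun m hm => ?_
        refine measureReal_singleton_le_four_div_sqrt hC.le (by omega) (h0 n hn) (hk n hn)
          hL.1 hL1 ?_
        convert hm using 3
        norm_num
    _ = 4 * ((log n / (2 * 2 * log (log n)) + 1) / √n) := by ring
    _ ≤ 4 * ((log n + 1) / √n) := by gcongr

/-- For each n, let μ n be the law (a probability measure on ℕ) of the graph distance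
d(w₁,w₂) between two independent uniformly chosen vertices of a random graph on
v₁,…,v_n. Assume P(w₁ = w₂) gives (μ n) {0} ≤ 1/n, and that averaging the bound
P(d(v_i,v_j) = k) ≤ (C log n)^k/√(ij) yields
(μ n) {k} ≤ (1/n²) Σ_{i,j=1}^n (C log n)^k/√(ij) for all k ≥ 1. Then for
K = ⌊log n/(2C' log log n)⌋ with a suitable constant C' > 0 depending only on C,
P(d(w₁,w₂) ≤ K) → 0 as n → ∞. -/
theorem stmt_16 (C : ℝ) (hC : 0 < C) (μ : ℕ → Measure ℕ)
    (hprob : ∀ n, IsProbabilityMeasure (μ n))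
    (h0 : ∀ n : ℕ, 2 ≤ n → (μ n {0}).toReal ≤ 1/(n:ℝ))
    (hk : ∀ n : ℕ, 2 ≤ n → ∀ k : ℕ, 1 ≤ k →
      (μ n {k}).toReal ≤ (1/(n:ℝ)^2) *
        ∑ i ∈ Finset.Icc 1 n, ∑ j ∈ Finset.Icc 1 n,
          (C * Real.log n) ^ k / Real.sqrt ((i:ℝ) * j)) :
    ∃ C' > (0:ℝ), Tendsto
      (fun n : ℕ => (μ n {m : ℕ |
        (m:ℝ) ≤ Real.log n / (2 * C' * Real.log (Real.log n))}).toReal)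
      atTop (nhds 0) :=
  stmt_16_general C hC μ h0 hk
end
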